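/- arXiv:2109.12297 — 7 statements merged into one kernel-verified Lean document; each statement's English description precedes it below -/
import Mathlib

section
/- Suppose a tuple (x, (σ_i), (λ_i), (d_i)) satisfies the per-agent KKT system and additionally σ_i = Σ_{j≠i} A_j x_j for every i = 1,…,N. Then the pair (x, λ) with λ = Σ_{i=1}^N λ_i satisfies the global KKT system (in particular, one may take as witnesses the same subgradients (g_i, h_i) and normal-cone elements v_i, since d_j = −h_j − λ_j for every j). -/
open Matrix Finset

/-- If a tuple `(x, σ, λ, d)` satisfies the per-agent KKT system
(witnessed by subgradients `(g i, h i)` of `J i` at `(x i, σ i)` and normal-cone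
elements `v i`), and additionally `σ i = ∑_{j ≠ i} A j *ᵥ x j` for every `i`,
then `(x, ∑ i, lam i)` satisfies the global KKT system, witnessed by the same
subgradients and normal-cone elements. -/
theorem stmt_0
    (N l : ℕ) (hN : 2 ≤ N)
    (n : Fin N → ℕ)
    (X : ∀ i, Set (Fin (n i) → ℝ))
    (hXne : ∀ i, (X i).Nonempty)
    (hXcl : ∀ i, IsClosed (X i))
    (hXcv : ∀ i, Convex ℝ (X i))
    (A : ∀ i, Matrix (Fin l) (Fin (n i)) ℝ)
    (J : ∀ i, (Fin (n i) → ℝ) → (Fin l → ℝ) → ℝ)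
    (hJ : ∀ i, ConvexOn ℝ Set.univ (fun p : (Fin (n i) → ℝ) × (Fin l → ℝ) => J i p.1 p.2))
    (c : Fin l → ℝ)
    (x : ∀ i, Fin (n i) → ℝ)
    (σ lam d : Fin N → Fin l → ℝ)
    (g : ∀ i, Fin (n i) → ℝ) (h : Fin N → Fin l → ℝ) (v : ∀ i, Fin (n i) → ℝ)
    -- x is feasible for the local sets
    (hx : ∀ i, x i ∈ X i)
    -- (g i, h i) is a subgradient of J i at (x i, σ i)
    (hsub : ∀ i, ∀ (x' : Fin (n i) → ℝ) (σ' : Fin l → ℝ),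
      J i (x i) (σ i) + g i ⬝ᵥ (x' - x i) + h i ⬝ᵥ (σ' - σ i) ≤ J i x' σ')
    -- v i is in the normal cone of X i at x i
    (hv : ∀ i, ∀ w ∈ X i, v i ⬝ᵥ (w - x i) ≤ 0)
    -- per-agent stationarity in x_i
    (heq1 : ∀ i, g i + (A i)ᵀ *ᵥ lam i
      - ∑ j ∈ Finset.univ.erase i, (A i)ᵀ *ᵥ d j + v i = 0)
    -- per-agent stationarity in σ_i
    (heq2 : ∀ i, h i + lam i + d i = 0)
    -- per-agent dual feasibility, primal feasibility and complementary slackness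
    (hlam : ∀ i, 0 ≤ lam i)
    (hfeas : ∀ i, 0 ≤ c - A i *ᵥ x i - σ i)
    (hcs : ∀ i, lam i ⬝ᵥ (c - A i *ᵥ x i - σ i) = 0)
    -- the aggregates are correct
    (hsig : ∀ i, σ i = ∑ j ∈ Finset.univ.erase i, A j *ᵥ x j) :
    -- global stationarity with λ = ∑ i, lam i, witnessed by the same g, h, v
    (∀ i, g i + ∑ j ∈ Finset.univ.erase i, (A i)ᵀ *ᵥ h j
        + (A i)ᵀ *ᵥ (∑ j, lam j) + v i = 0)
    -- global dual feasibility, primal feasibility and complementary slackness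
    ∧ 0 ≤ ∑ j, lam j
    ∧ 0 ≤ c - ∑ i, A i *ᵥ x i
    ∧ (∑ j, lam j) ⬝ᵥ (c - ∑ i, A i *ᵥ x i) = 0
    -- and moreover d j = -h j - lam j for every j
    ∧ (∀ j, d j = -h j - lam j) := by

  have hd : ∀ j, d j = -h j - lam j := by
    intro j
    have e := heq2 j
    funext k
    have := congrFun e k
    simp only [Pi.add_apply, Pi.zero_apply, Pi.sub_apply, Pi.neg_apply] at this ⊢
    linarith
  have i0 : Fin N := ⟨0, by omega⟩
  have hZ : ∀ j, c - ∑ i, A i *ᵥ x i = c - A j *ᵥ x j - σ j := by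
    intro j
    rw [hsig j, ← Finset.add_sum_erase _ _ (Finset.mem_univ j)]
    abel
  refine ⟨?_, ?_, ?_, ?_, hd⟩
  · intro i
    have e := heq1 i
    have hsum : (A i)ᵀ *ᵥ (∑ j, lam j)
        = (A i)ᵀ *ᵥ lam i + ∑ j ∈ Finset.univ.erase i, (A i)ᵀ *ᵥ lam j := by
      simp only [← Matrix.mulVecLin_apply, ← map_sum]
      rw [← Finset.add_sum_erase _ lam (Finset.mem_univ i), map_add]
    have hdj : (∑ j ∈ Finset.univ.erase i, (A i)ᵀ *ᵥ d j)
        = -(∑ j ∈ Finset.univ.erase i, (A i)ᵀ *ᵥ h j)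
          - ∑ j ∈ Finset.univ.erase i, (A i)ᵀ *ᵥ lam j := by
      rw [← Finset.sum_neg_distrib, ← Finset.sum_sub_distrib]
      refine Finset.sum_congr rfl fun j _ => ?_
      rw [hd j]
      simp [Matrix.mulVec_sub, Matrix.mulVec_neg]
    rw [hdj] at e
    rw [hsum]
    calc g i + ∑ j ∈ Finset.univ.erase i, (A i)ᵀ *ᵥ h j
          + ((A i)ᵀ *ᵥ lam i + ∑ j ∈ Finset.univ.erase i, (A i)ᵀ *ᵥ lam j) + v i
        = g i + (A i)ᵀ *ᵥ lam i
          - (-(∑ j ∈ Finset.univ.erase i, (A i)ᵀ *ᵥ h j)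
             - ∑ j ∈ Finset.univ.erase i, (A i)ᵀ *ᵥ lam j) + v i := by abel
      _ = 0 := e
  · exact Finset.sum_nonneg fun j _ => hlam j
  · rw [hZ i0]; exact hfeas i0
  · have hsd : ∀ (s : Finset (Fin N)) (z : Fin l → ℝ),
        (∑ j ∈ s, lam j) ⬝ᵥ z = ∑ j ∈ s, lam j ⬝ᵥ z := by
      intro s z
      induction s using Finset.cons_induction with
      | empty => simp
      | cons a s ha ih =>
          rw [Finset.sum_cons, Finset.sum_cons, add_dotProduct, ih]
    rw [hsd]
    refine Finset.sum_eq_zero fun j _ => ?_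
    rw [hZ j]
    exact hcs j
end

section
/- Suppose the pair (x, λ) satisfies the global KKT system, witnessed by subgradients (g_i, h_i) of J_i at (x_i, σ_i) and v_i ∈ N_{𝒳_i}(x_i), where σ_i = Σ_{j≠i} A_j x_j. Then, setting λ_i := λ/N and d_i := −h_i − λ/N for every i, the tuple (x, (σ_i), (λ_i), (d_i)) satisfies the per-agent KKT system (witnessed by the same subgradients and normal-cone elements). -/
open Matrix Finset

/-! Splitting the global multiplier evenly, `λ_i = λ/N`, the per-agent slacks
`c - A_i x_i - σ_i` all coincide with the global slack `c - ∑ A_j x_j`, so feasibility and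
complementary slackness transfer verbatim. For stationarity, the choice `d_j = -h_j - λ/N`
makes `-∑_{j ≠ i} A_iᵀ d_j` contribute `∑_{j ≠ i} A_iᵀ h_j` together with the missing
`(N - 1)/N` share of `A_iᵀ λ`. -/

lemma sub_sub_sum_erase {ι M : Type*} [DecidableEq ι] [AddCommGroup M] {s : Finset ι}
    {i : ι} (hi : i ∈ s) (c : M) (f : ι → M) :
    c - f i - ∑ j ∈ s.erase i, f j = c - ∑ j ∈ s, f j := by
  rw [sub_sub, add_sum_erase s f hi]

lemma inv_card_smul_add_sum_erase {ι M : Type*} [Fintype ι] [DecidableEq ι] [AddCommGroup M]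
    [Module ℝ M] (i : ι) (y : M) :
    (Fintype.card ι : ℝ)⁻¹ • y + ∑ _j ∈ univ.erase i, (Fintype.card ι : ℝ)⁻¹ • y = y := by
  have hcard : (Fintype.card ι : ℝ) ≠ 0 := by
    exact_mod_cast (Fintype.card_pos_iff.mpr ⟨i⟩).ne'
  rw [add_sum_erase _ (fun _ => _) (mem_univ i), sum_const, card_univ,
    ← Nat.cast_smul_eq_nsmul ℝ, smul_smul, mul_inv_cancel₀ hcard, one_smul]

lemma mulVec_inv_card_smul_sub_sum_erase {ι m k : Type*} [Fintype ι] [DecidableEq ι]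
    [Fintype k] (B : Matrix m k ℝ) (h : ι → k → ℝ) (lam : k → ℝ) (i : ι) :
    B *ᵥ ((Fintype.card ι : ℝ)⁻¹ • lam)
        - ∑ j ∈ univ.erase i, B *ᵥ (-h j - (Fintype.card ι : ℝ)⁻¹ • lam)
      = ∑ j ∈ univ.erase i, B *ᵥ h j + B *ᵥ lam := by
  simp only [mulVec_sub, mulVec_neg, mulVec_smul, sum_sub_distrib, sum_neg_distrib]
  conv_rhs => rw [← inv_card_smul_add_sum_erase i (B *ᵥ lam)]
  abel

theorem stmt_1_general
    (N l : ℕ)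
    (n : Fin N → ℕ)
    (A : ∀ i, Matrix (Fin l) (Fin (n i)) ℝ)
    (c : Fin l → ℝ)
    (x : ∀ i, Fin (n i) → ℝ)
    (lam : Fin l → ℝ)
    (σ : Fin N → Fin l → ℝ)
    (g : ∀ i, Fin (n i) → ℝ) (h : Fin N → Fin l → ℝ) (v : ∀ i, Fin (n i) → ℝ)
    -- the aggregates
    (hsig : ∀ i, σ i = ∑ j ∈ Finset.univ.erase i, A j *ᵥ x j)
    -- global stationarity
    (heq : ∀ i, g i + ∑ j ∈ Finset.univ.erase i, (A i)ᵀ *ᵥ h j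
      + (A i)ᵀ *ᵥ lam + v i = 0)
    -- global dual feasibility, primal feasibility and complementary slackness
    (hlam : 0 ≤ lam)
    (hfeas : 0 ≤ c - ∑ i, A i *ᵥ x i)
    (hcs : lam ⬝ᵥ (c - ∑ i, A i *ᵥ x i) = 0) :
    -- the per-agent KKT system holds with lam_i := λ/N and d_i := -h i - λ/N,
    -- witnessed by the same g, h, v
    (∀ i, g i + (A i)ᵀ *ᵥ ((N : ℝ)⁻¹ • lam)
        - ∑ j ∈ Finset.univ.erase i, (A i)ᵀ *ᵥ (-h j - (N : ℝ)⁻¹ • lam) + v i = 0)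
    ∧ (∀ i, h i + (N : ℝ)⁻¹ • lam + (-h i - (N : ℝ)⁻¹ • lam) = 0)
    ∧ (∀ i : Fin N, 0 ≤ (N : ℝ)⁻¹ • lam)
    ∧ (∀ i, 0 ≤ c - A i *ᵥ x i - σ i)
    ∧ (∀ i, ((N : ℝ)⁻¹ • lam) ⬝ᵥ (c - A i *ᵥ x i - σ i) = 0) := by
  have hslack : ∀ i, c - A i *ᵥ x i - σ i = c - ∑ j, A j *ᵥ x j := fun i =>
    hsig i ▸ sub_sub_sum_erase (mem_univ i) c (fun j => A j *ᵥ x j)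
  refine ⟨fun i => ?_, fun i => by abel, fun _ => smul_nonneg (by positivity) hlam,
    fun i => hslack i ▸ hfeas, fun i => by rw [hslack i, smul_dotProduct, hcs, smul_zero]⟩
  have hstat := mulVec_inv_card_smul_sub_sum_erase (A i)ᵀ h lam i
  rw [Fintype.card_fin] at hstat
  rw [add_sub_assoc, hstat, ← add_assoc]
  exact heq i

/-- If `(x, λ)` satisfies the global KKT system (witnessed by
subgradients `(g i, h i)` and normal-cone elements `v i`), then, setting
`lam i := λ/N` and `d i := -h i - λ/N`, the tuple `(x, σ, (lam i), (d i))`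
with `σ i = ∑_{j ≠ i} A j *ᵥ x j` satisfies the per-agent KKT system,
witnessed by the same subgradients and normal-cone elements. -/
theorem stmt_1
    (N l : ℕ) (hN : 2 ≤ N)
    (n : Fin N → ℕ)
    (X : ∀ i, Set (Fin (n i) → ℝ))
    (hXne : ∀ i, (X i).Nonempty)
    (hXcl : ∀ i, IsClosed (X i))
    (hXcv : ∀ i, Convex ℝ (X i))
    (A : ∀ i, Matrix (Fin l) (Fin (n i)) ℝ)
    (J : ∀ i, (Fin (n i) → ℝ) → (Fin l → ℝ) → ℝ)
    (hJ : ∀ i, ConvexOn ℝ Set.univ (fun p : (Fin (n i) → ℝ) × (Fin l → ℝ) => J i p.1 p.2))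
    (c : Fin l → ℝ)
    (x : ∀ i, Fin (n i) → ℝ)
    (lam : Fin l → ℝ)
    (σ : Fin N → Fin l → ℝ)
    (g : ∀ i, Fin (n i) → ℝ) (h : Fin N → Fin l → ℝ) (v : ∀ i, Fin (n i) → ℝ)
    -- the aggregates
    (hsig : ∀ i, σ i = ∑ j ∈ Finset.univ.erase i, A j *ᵥ x j)
    -- x is feasible for the local sets
    (hx : ∀ i, x i ∈ X i)
    -- (g i, h i) is a subgradient of J i at (x i, σ i)
    (hsub : ∀ i, ∀ (x' : Fin (n i) → ℝ) (σ' : Fin l → ℝ),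
      J i (x i) (σ i) + g i ⬝ᵥ (x' - x i) + h i ⬝ᵥ (σ' - σ i) ≤ J i x' σ')
    -- v i is in the normal cone of X i at x i
    (hv : ∀ i, ∀ w ∈ X i, v i ⬝ᵥ (w - x i) ≤ 0)
    -- global stationarity
    (heq : ∀ i, g i + ∑ j ∈ Finset.univ.erase i, (A i)ᵀ *ᵥ h j
      + (A i)ᵀ *ᵥ lam + v i = 0)
    -- global dual feasibility, primal feasibility and complementary slackness
    (hlam : 0 ≤ lam)
    (hfeas : 0 ≤ c - ∑ i, A i *ᵥ x i)
    (hcs : lam ⬝ᵥ (c - ∑ i, A i *ᵥ x i) = 0) :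
    -- the per-agent KKT system holds with lam_i := λ/N and d_i := -h i - λ/N,
    -- witnessed by the same g, h, v
    (∀ i, g i + (A i)ᵀ *ᵥ ((N : ℝ)⁻¹ • lam)
        - ∑ j ∈ Finset.univ.erase i, (A i)ᵀ *ᵥ (-h j - (N : ℝ)⁻¹ • lam) + v i = 0)
    ∧ (∀ i, h i + (N : ℝ)⁻¹ • lam + (-h i - (N : ℝ)⁻¹ • lam) = 0)
    ∧ (∀ i : Fin N, 0 ≤ (N : ℝ)⁻¹ • lam)
    ∧ (∀ i, 0 ≤ c - A i *ᵥ x i - σ i)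
    ∧ (∀ i, ((N : ℝ)⁻¹ • lam) ⬝ᵥ (c - A i *ᵥ x i - σ i) = 0) :=
  stmt_1_general N l n A c x lam σ g h v hsig heq hlam hfeas hcs
end

section
/- Let N ≥ 1, let W ∈ ℝ^{N×N} satisfy W·1_N = 0 (every row of W sums to zero), and let v_1,…,v_N, σ_1,…,σ_N, y_1,…,y_N ∈ ℝ^l. Suppose (i) (N−1)·v_i − σ_i = Σ_{j=1}^N W_{ji}·y_j for every i, and (ii) v_i + σ_i = v_j + σ_j for all i, j. Then σ_i = Σ_{j≠i} v_j for every i. -/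
open Matrix Finset

/-- If `W · 1 = 0` (row sums zero), `(N-1)•v i - σ i = ∑ j, W j i • y j`
for every `i`, and `v i + σ i = v j + σ j` for all `i, j`, then
`σ i = ∑_{j ≠ i} v j` for every `i`. -/
theorem stmt_2
    (N l : ℕ) (hN : 1 ≤ N)
    (W : Matrix (Fin N) (Fin N) ℝ)
    (hW : W *ᵥ (fun _ => (1 : ℝ)) = 0)
    (v σ y : Fin N → Fin l → ℝ)
    (h1 : ∀ i, ((N : ℝ) - 1) • v i - σ i = ∑ j, W j i • y j)
    (h2 : ∀ i j, v i + σ i = v j + σ j) :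
    ∀ i, σ i = ∑ j ∈ Finset.univ.erase i, v j := by
  intro i
  have hrow : ∀ j : Fin N, ∑ k, W j k = 0 := by
    intro j
    have := congrFun hW j
    simpa [Matrix.mulVec, dotProduct] using this
  have h0 : ∑ i : Fin N, ∑ j, W j i • y j = 0 := by
    rw [Finset.sum_comm]
    apply Finset.sum_eq_zero
    intro j _
    rw [← Finset.sum_smul, hrow j, zero_smul]
  have hsum : ∑ j, σ j = ((N : ℝ) - 1) • ∑ j, v j := by
    have h : ∑ i, (((N : ℝ) - 1) • v i - σ i) = 0 := by
      rw [Finset.sum_congr rfl fun i _ => h1 i, h0]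
    rw [Finset.sum_sub_distrib, ← Finset.smul_sum, sub_eq_zero] at h
    exact h.symm
  have key : (N : ℝ) • (v i + σ i) = (N : ℝ) • ∑ j, v j := by
    have hs : ∑ _j : Fin N, (v i + σ i) = ∑ j, (v j + σ j) :=
      Finset.sum_congr rfl fun j _ => h2 i j
    rw [Finset.sum_const, Finset.card_univ, Fintype.card_fin,
      Finset.sum_add_distrib, hsum] at hs
    rw [← Nat.cast_smul_eq_nsmul ℝ] at hs
    rw [hs]
    module
  have hc : (N : ℝ) ≠ 0 := Nat.cast_ne_zero.mpr (by omega)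
  have hvs : v i + σ i = ∑ j, v j := smul_right_injective _ hc key
  rw [Finset.sum_erase_eq_sub (Finset.mem_univ i)]
  rw [← hvs]
  abel
end

section
/- Suppose variables (x_i, σ_i, y_i)_{i∈𝒩}, edge variables (λ_{ji}, μ_{ji}, y_{ji})_{(j,i)∈ℰ}, and multipliers (d_{1i}, d_{2i})_{i∈𝒩} satisfy the decomposed zero system. Then x = (x_1,…,x_N) is a minimizer of the global problem: x_i ∈ 𝒳_i for all i, Σ_{i=1}^N A_i x_i ≤ c, and J(x) ≤ J(x') for every x' = (x'_1,…,x'_N) with x'_i ∈ 𝒳_i for all i and Σ_i A_i x'_i ≤ c; moreover σ_i = Σ_{j≠i} A_j x_j for every i. -/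
open Matrix Finset

/-- The decomposed zero system (componentwise form of `0 ∈ 𝒯ψ` for the operator
derived from the network Lagrangian): for every agent `i` there exist a
subgradient `(g, h)` of `J i` at `(x i, σ i)` and a normal-cone element `v`
such that conditions (i)-(vi) hold. Here `E` is the directed edge set,
`lam e`, `mu e`, `yE e` are the variables on edge `e = (j, i)` (with tail `j`
and head `i`), and `d1 i`, `d2 i` are the multipliers of agent `i`. -/
def DecomposedZero (N l : ℕ) (n : Fin N → ℕ)
    (X : ∀ i, Set (Fin (n i) → ℝ))
    (A : ∀ i, Matrix (Fin l) (Fin (n i)) ℝ)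
    (J : ∀ i, (Fin (n i) → ℝ) → (Fin l → ℝ) → ℝ)
    (c : Fin l → ℝ)
    (E : Finset (Fin N × Fin N))
    (W : Matrix (Fin N) (Fin N) ℝ)
    (x : ∀ i, Fin (n i) → ℝ)
    (σ y : Fin N → Fin l → ℝ)
    (lam mu yE : Fin N × Fin N → Fin l → ℝ)
    (d1 d2 : Fin N → Fin l → ℝ) : Prop :=
  ∀ i : Fin N,
    ∃ (g : Fin (n i) → ℝ) (h : Fin l → ℝ) (v : Fin (n i) → ℝ),
      -- (g, h) is a subgradient of J i at (x i, σ i)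
      (∀ (x' : Fin (n i) → ℝ) (σ' : Fin l → ℝ),
        J i (x i) (σ i) + g ⬝ᵥ (x' - x i) + h ⬝ᵥ (σ' - σ i) ≤ J i x' σ') ∧
      -- v is in the normal cone of X i at x i
      x i ∈ X i ∧ (∀ w ∈ X i, v ⬝ᵥ (w - x i) ≤ 0) ∧
      -- (i) consensus of the local estimates of the auxiliary variables
      (∀ j, (j, i) ∈ E → yE (j, i) = y j) ∧
      -- (ii) consensus along edges
      (∀ j, (j, i) ∈ E → A i *ᵥ x i + σ i = A j *ᵥ x j + σ j) ∧
      -- (iii) weight-matrix constraint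
      (((N : ℝ) - 1) • (A i *ᵥ x i) - σ i
        = W i i • y i
          + ∑ j ∈ Finset.univ.filter (fun j => (j, i) ∈ E), W j i • yE (j, i)) ∧
      -- (iv) stationarity in x i and σ i,
      -- with λ_{iB} = ∑_{(j,i)∈E} lam (j,i) - ∑_{(i,j)∈E} lam (i,j)
      (g + ((N : ℝ) - 1) • ((A i)ᵀ *ᵥ d1 i) + (A i)ᵀ *ᵥ d2 i
        + (A i)ᵀ *ᵥ (∑ e ∈ E.filter (fun e => e.2 = i), lam e
              - ∑ e ∈ E.filter (fun e => e.1 = i), lam e) + v = 0) ∧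
      (h - d1 i + d2 i
        + (∑ e ∈ E.filter (fun e => e.2 = i), lam e
            - ∑ e ∈ E.filter (fun e => e.1 = i), lam e) = 0) ∧
      -- (v) stationarity in the auxiliary variables
      (W i i • d1 i + ∑ k ∈ Finset.univ.filter (fun k => (i, k) ∈ E), mu (i, k) = 0) ∧
      (∀ j, (j, i) ∈ E → mu (j, i) = W j i • d1 i) ∧
      -- (vi) dual feasibility, primal feasibility, complementary slackness
      (0 ≤ d2 i) ∧ (A i *ᵥ x i + σ i ≤ c) ∧ (d2 i ⬝ᵥ (c - A i *ᵥ x i - σ i) = 0)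

/-- Any solution of the decomposed zero system yields a minimizer
`x` of the global problem, and the aggregates `σ i` are correct. -/
theorem stmt_7
    (N l : ℕ) (hN : 2 ≤ N)
    (n : Fin N → ℕ)
    (X : ∀ i, Set (Fin (n i) → ℝ))
    (hXne : ∀ i, (X i).Nonempty)
    (hXcl : ∀ i, IsClosed (X i))
    (hXcv : ∀ i, Convex ℝ (X i))
    (A : ∀ i, Matrix (Fin l) (Fin (n i)) ℝ)
    (J : ∀ i, (Fin (n i) → ℝ) → (Fin l → ℝ) → ℝ)
    (hJ : ∀ i, ConvexOn ℝ Set.univ (fun p : (Fin (n i) → ℝ) × (Fin l → ℝ) => J i p.1 p.2))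
    (c : Fin l → ℝ)
    (E : Finset (Fin N × Fin N))
    (hloop : ∀ e ∈ E, e.1 ≠ e.2)
    (hconn : ∀ i j : Fin N,
      Relation.ReflTransGen (fun a b : Fin N => (a, b) ∈ E ∨ (b, a) ∈ E) i j)
    (W : Matrix (Fin N) (Fin N) ℝ)
    (hWrow : W *ᵥ (fun _ => (1 : ℝ)) = 0)
    (hWker : ∀ z : Fin N → ℝ, W *ᵥ z = 0 ↔ ∃ a : ℝ, z = fun _ => a)
    (hWsp : ∀ j i : Fin N, j ≠ i → (j, i) ∉ E → W j i = 0)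
    (x : ∀ i, Fin (n i) → ℝ)
    (σ y : Fin N → Fin l → ℝ)
    (lam mu yE : Fin N × Fin N → Fin l → ℝ)
    (d1 d2 : Fin N → Fin l → ℝ)
    (hzero : DecomposedZero N l n X A J c E W x σ y lam mu yE d1 d2) :
    (∀ i, x i ∈ X i) ∧
    (∑ i, A i *ᵥ x i ≤ c) ∧
    (∀ x' : ∀ i, Fin (n i) → ℝ, (∀ i, x' i ∈ X i) → (∑ i, A i *ᵥ x' i ≤ c) →
      ∑ i, J i (x i) (∑ j ∈ Finset.univ.erase i, A j *ᵥ x j)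
        ≤ ∑ i, J i (x' i) (∑ j ∈ Finset.univ.erase i, A j *ᵥ x' j)) ∧
    (∀ i, σ i = ∑ j ∈ Finset.univ.erase i, A j *ᵥ x j) := by
  classical
  choose g h v hsub hxX hnc hyE hcons hiii hiv1 hiv2 hv1 hv2 hd2 hfeas hcs using hzero
  have hNpos : 0 < N := by omega
  set i₀ : Fin N := ⟨0, hNpos⟩ with hi₀
  -- abbreviation for the edge-multiplier combination
  set L : Fin N → Fin l → ℝ := fun i => (∑ e ∈ E.filter (fun e => e.2 = i), lam e
      - ∑ e ∈ E.filter (fun e => e.1 = i), lam e) with hL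
  have hiv1' : ∀ i, g i + ((N : ℝ) - 1) • ((A i)ᵀ *ᵥ d1 i) + (A i)ᵀ *ᵥ d2 i
      + (A i)ᵀ *ᵥ L i + v i = 0 := fun i => hiv1 i
  have hiv2' : ∀ i, h i - d1 i + d2 i + L i = 0 := fun i => hiv2 i
  -- Step A : A i x i + σ i is constant (connectivity)
  have hseq : ∀ i j : Fin N, A i *ᵥ x i + σ i = A j *ᵥ x j + σ j := by
    intro i j
    have step : ∀ a b : Fin N, ((a, b) ∈ E ∨ (b, a) ∈ E) →
        A a *ᵥ x a + σ a = A b *ᵥ x b + σ b := by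
      intro a b hab
      rcases hab with hab | hba
      · exact (hcons b a hab).symm
      · exact hcons a b hba
    have hc := hconn i j
    induction hc with
    | refl => rfl
    | tail _ h2 ih => exact ih.trans (step _ _ h2)
  -- Step B : sum identity from (iii)
  have hcolsum : ∀ j : Fin N, ∑ i, W j i = 0 := by
    intro j
    have h0 := congrFun hWrow j
    simpa [Matrix.mulVec, dotProduct] using h0
  have hWy : ∀ i : Fin N, ((N : ℝ) - 1) • (A i *ᵥ x i) - σ i = ∑ j, W j i • y j := by
    intro i
    rw [hiii i]
    have h1 : ∑ j ∈ Finset.univ.filter (fun j => (j, i) ∈ E), W j i • yE (j, i)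
        = ∑ j ∈ Finset.univ.filter (fun j => (j, i) ∈ E), W j i • y j :=
      Finset.sum_congr rfl (fun j hj => by rw [hyE i j (by simpa using hj)])
    rw [h1]
    have hss : Finset.univ.filter (fun j => (j, i) ∈ E) ⊆ Finset.univ.erase i := by
      intro j hj
      simp only [Finset.mem_filter] at hj
      exact Finset.mem_erase.mpr ⟨hloop _ hj.2, Finset.mem_univ j⟩
    rw [Finset.sum_subset hss (fun j hj hnj => by
      have hji : (j, i) ∉ E := by simpa using hnj
      have hw : W j i = 0 := hWsp j i (Finset.mem_erase.mp hj).1 hji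
      simp [hw])]
    exact Finset.add_sum_erase _ (fun j => W j i • y j) (Finset.mem_univ i)
  have hsumzero : ∑ i, (((N : ℝ) - 1) • (A i *ᵥ x i) - σ i) = 0 := by
    calc ∑ i, (((N : ℝ) - 1) • (A i *ᵥ x i) - σ i) = ∑ i, ∑ j, W j i • y j :=
          Finset.sum_congr rfl (fun i _ => hWy i)
      _ = ∑ j, ∑ i, W j i • y j := Finset.sum_comm
      _ = ∑ j, (∑ i, W j i) • y j :=
          Finset.sum_congr rfl (fun j _ => (Finset.sum_smul).symm)
      _ = 0 := by simp [hcolsum]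
  set s : Fin l → ℝ := ∑ j, A j *ᵥ x j with hs
  -- Step C : the constant is s, hence σ identity and feasibility
  have hFs : ∀ i, A i *ᵥ x i + σ i = s := by
    intro i
    have hσsum : ∑ j, σ j = ((N : ℝ) - 1) • s := by
      have h0 : ∑ j, (((N : ℝ) - 1) • (A j *ᵥ x j) - σ j)
          = ((N : ℝ) - 1) • s - ∑ j, σ j := by
        rw [Finset.sum_sub_distrib, ← Finset.smul_sum, hs]
      rw [h0] at hsumzero
      exact (sub_eq_zero.mp hsumzero).symm
    have h3 : ∑ j, σ j = (N : ℝ) • (A i *ᵥ x i + σ i) - s := by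
      have hterm : ∀ j : Fin N, σ j = (A i *ᵥ x i + σ i) - A j *ᵥ x j := by
        intro j
        have := hseq j i
        rw [← this]; abel
      rw [Finset.sum_congr rfl (fun j _ => hterm j), Finset.sum_sub_distrib,
        Finset.sum_const, Finset.card_univ, Fintype.card_fin, ← hs,
        ← Nat.cast_smul_eq_nsmul ℝ]
    have h4 : (N : ℝ) • (A i *ᵥ x i + σ i) = (N : ℝ) • s := by
      have h5 := hσsum.symm.trans h3
      have h6 : (N : ℝ) • (A i *ᵥ x i + σ i) = ((N : ℝ) - 1) • s + s := by
        rw [h5]; abel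
      rw [h6, sub_smul, one_smul]; abel
    have hNne : (N : ℝ) ≠ 0 := Nat.cast_ne_zero.mpr (by omega)
    exact smul_right_injective (Fin l → ℝ) hNne h4
  have hσid : ∀ i, σ i = ∑ j ∈ Finset.univ.erase i, A j *ᵥ x j := by
    intro i
    have he : ∑ j ∈ Finset.univ.erase i, A j *ᵥ x j = s - A i *ᵥ x i := by
      rw [Finset.sum_erase_eq_sub (Finset.mem_univ i), ← hs]
    rw [he]
    have := hFs i
    rw [← this]; abel
  have hsc : s ≤ c := by
    have := hfeas i₀
    rwa [hFs i₀] at this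
  -- Step D : d1 is constant across agents
  have hd1row : ∀ j : Fin N, ∑ k, W j k • d1 k = 0 := by
    intro j
    have h1 : ∑ k ∈ Finset.univ.filter (fun k => (j, k) ∈ E), mu (j, k)
        = ∑ k ∈ Finset.univ.filter (fun k => (j, k) ∈ E), W j k • d1 k :=
      Finset.sum_congr rfl (fun k hk => hv2 k j (by simpa using hk))
    have h2 := hv1 j
    rw [h1] at h2
    have hss : Finset.univ.filter (fun k => (j, k) ∈ E) ⊆ Finset.univ.erase j := by
      intro k hk
      simp only [Finset.mem_filter] at hk
      exact Finset.mem_erase.mpr ⟨fun hkj => hloop _ hk.2 (by rw [hkj]), Finset.mem_univ k⟩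
    rw [Finset.sum_subset hss (fun k hk hnk => by
      have hjk : (j, k) ∉ E := by simpa using hnk
      have hw : W j k = 0 := hWsp j k (Ne.symm (Finset.mem_erase.mp hk).1) hjk
      simp [hw])] at h2
    rw [Finset.add_sum_erase _ (fun k => W j k • d1 k) (Finset.mem_univ j)] at h2
    exact h2
  have hd1const : ∀ i, d1 i = d1 i₀ := by
    intro i
    funext m
    have h0 : W *ᵥ (fun k => d1 k m) = 0 := by
      funext j
      have := congrFun (hd1row j) m
      simpa [Matrix.mulVec, dotProduct, Finset.sum_apply] using this
    obtain ⟨a, ha⟩ := (hWker _).mp h0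
    exact (congrFun ha i).trans (congrFun ha i₀).symm
  -- Step B2 : the λ-combinations sum to zero
  have hLsum : ∑ i, L i = 0 := by
    rw [hL]
    rw [Finset.sum_sub_distrib,
      Finset.sum_fiberwise_of_maps_to (fun e _ => Finset.mem_univ e.2) lam,
      Finset.sum_fiberwise_of_maps_to (fun e _ => Finset.mem_univ e.1) lam]
    simp
  -- dot-product / sum exchange helper
  have dsum : ∀ (u : Fin l → ℝ) (f : Fin N → Fin l → ℝ),
      ∑ i, u ⬝ᵥ f i = u ⬝ᵥ ∑ i, f i := by
    intro u f
    simp only [dotProduct, Finset.sum_apply, Finset.mul_sum]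
    exact Finset.sum_comm
  have dsum' : ∀ (w : Fin l → ℝ) (f : Fin N → Fin l → ℝ),
      ∑ i, f i ⬝ᵥ w = (∑ i, f i) ⬝ᵥ w := by
    intro w f
    simp only [dotProduct, Finset.sum_apply, Finset.sum_mul]
    exact Finset.sum_comm
  refine ⟨hxX, hsc, ?_, hσid⟩
  -- Step E : optimality
  intro x' hx' hc'
  set s' : Fin l → ℝ := ∑ j, A j *ᵥ x' j with hs'
  set σ' : Fin N → Fin l → ℝ := fun i => ∑ j ∈ Finset.univ.erase i, A j *ᵥ x' j with hσ'
  have hFs' : ∀ i, A i *ᵥ x' i + σ' i = s' := by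
    intro i
    have he : σ' i = s' - A i *ᵥ x' i := by
      rw [hσ', hs']
      exact Finset.sum_erase_eq_sub (Finset.mem_univ i)
    rw [he]; abel
  have hδ : ∀ i, σ' i - σ i = (s' - s) - (A i *ᵥ x' i - A i *ᵥ x i) := by
    intro i
    have h1 : σ' i = s' - A i *ᵥ x' i := by
      rw [← hFs' i]; abel
    have h2 : σ i = s - A i *ᵥ x i := by
      rw [← hFs i]; abel
    rw [h1, h2]; abel
  have hdot : ∀ (u : Fin l → ℝ) (i : Fin N),
      u ⬝ᵥ σ' i - u ⬝ᵥ σ i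
        = u ⬝ᵥ s' - u ⬝ᵥ s - u ⬝ᵥ (A i *ᵥ x' i) + u ⬝ᵥ (A i *ᵥ x i) := by
    intro u i
    have := congrArg (fun w => u ⬝ᵥ w) (hδ i)
    simp only [dotProduct_sub] at this
    linarith
  have hcs' : ∀ i, d2 i ⬝ᵥ c = d2 i ⬝ᵥ s := by
    intro i
    have h0 := hcs i
    have h1 : c - A i *ᵥ x i - σ i = c - s := by rw [sub_sub, hFs i]
    rw [h1, dotProduct_sub] at h0
    linarith
  -- per-agent scalar expansion of the stationarity conditions
  have e1 : ∀ i, g i ⬝ᵥ (x' i - x i)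
      = -(((N : ℝ) - 1) * (d1 i₀ ⬝ᵥ (A i *ᵥ x' i) - d1 i₀ ⬝ᵥ (A i *ᵥ x i))
          + (d2 i ⬝ᵥ (A i *ᵥ x' i) - d2 i ⬝ᵥ (A i *ᵥ x i))
          + (L i ⬝ᵥ (A i *ᵥ x' i) - L i ⬝ᵥ (A i *ᵥ x i))
          + v i ⬝ᵥ (x' i - x i)) := by
    intro i
    have h0 := congrArg (fun w => w ⬝ᵥ (x' i - x i)) (hiv1' i)
    simp only [add_dotProduct, smul_dotProduct, zero_dotProduct,
      smul_eq_mul] at h0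
    have ht : ∀ u : Fin l → ℝ,
        ((A i)ᵀ *ᵥ u) ⬝ᵥ (x' i - x i) = u ⬝ᵥ (A i *ᵥ x' i) - u ⬝ᵥ (A i *ᵥ x i) := by
      intro u
      rw [Matrix.mulVec_transpose, ← Matrix.dotProduct_mulVec, Matrix.mulVec_sub,
        dotProduct_sub]
    rw [ht, ht, ht, hd1const i] at h0
    linarith
  have e2 : ∀ i, h i ⬝ᵥ (σ' i - σ i)
      = (d1 i₀ ⬝ᵥ σ' i - d1 i₀ ⬝ᵥ σ i) - (d2 i ⬝ᵥ σ' i - d2 i ⬝ᵥ σ i)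
        - (L i ⬝ᵥ σ' i - L i ⬝ᵥ σ i) := by
    intro i
    have h0 := congrArg (fun w => w ⬝ᵥ (σ' i - σ i)) (hiv2' i)
    simp only [add_dotProduct, sub_dotProduct, zero_dotProduct,
      dotProduct_sub] at h0
    rw [hd1const i] at h0
    simp only [dotProduct_sub]
    linarith
  -- the combined per-agent form
  have tform : ∀ i, g i ⬝ᵥ (x' i - x i) + h i ⬝ᵥ (σ' i - σ i)
      = -(v i ⬝ᵥ (x' i - x i)) + d2 i ⬝ᵥ (c - s') - L i ⬝ᵥ (s' - s)
        + d1 i₀ ⬝ᵥ ((σ' i - σ i) - ((N : ℝ) - 1) • (A i *ᵥ x' i - A i *ᵥ x i)) := by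
    intro i
    rw [e1 i, e2 i]
    simp only [dotProduct_sub, dotProduct_smul, smul_eq_mul]
    have hd := hdot (d2 i) i
    have hl := hdot (L i) i
    have hcc := hcs' i
    ring_nf
    linarith
  -- sum of the d1-terms vanishes
  have hsumδ : ∑ i, ((σ' i - σ i) - ((N : ℝ) - 1) • (A i *ᵥ x' i - A i *ᵥ x i)) = 0 := by
    have hterm : ∀ i : Fin N, (σ' i - σ i) - ((N : ℝ) - 1) • (A i *ᵥ x' i - A i *ᵥ x i)
        = (s' - s) - (N : ℝ) • (A i *ᵥ x' i - A i *ᵥ x i) := by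
      intro i
      rw [hδ i, sub_smul, one_smul]
      abel
    rw [Finset.sum_congr rfl (fun i _ => hterm i), Finset.sum_sub_distrib,
      ← Finset.smul_sum]
    have hA : ∑ i, (A i *ᵥ x' i - A i *ᵥ x i) = s' - s := by
      rw [Finset.sum_sub_distrib, ← hs', ← hs]
    rw [hA, Finset.sum_const, Finset.card_univ, Fintype.card_fin,
      ← Nat.cast_smul_eq_nsmul ℝ, sub_self]
  -- key nonnegativity
  have hkey : 0 ≤ ∑ i, (g i ⬝ᵥ (x' i - x i) + h i ⬝ᵥ (σ' i - σ i)) := by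
    rw [Finset.sum_congr rfl (fun i _ => tform i)]
    have hLz : ∑ i, L i ⬝ᵥ (s' - s) = 0 := by
      rw [dsum' (s' - s) L, hLsum, zero_dotProduct]
    have hDz : ∑ i, d1 i₀ ⬝ᵥ ((σ' i - σ i) - ((N : ℝ) - 1) • (A i *ᵥ x' i - A i *ᵥ x i))
        = 0 := by
      rw [dsum, hsumδ, dotProduct_zero]
    have hVn : 0 ≤ ∑ i, -(v i ⬝ᵥ (x' i - x i)) := by
      refine Finset.sum_nonneg (fun i _ => ?_)
      have := hnc i (x' i) (hx' i)
      linarith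
    have hD2n : 0 ≤ ∑ i, d2 i ⬝ᵥ (c - s') := by
      refine Finset.sum_nonneg (fun i _ => ?_)
      refine Finset.sum_nonneg (fun k _ => ?_)
      have h1 : 0 ≤ d2 i k := hd2 i k
      have h2 : 0 ≤ c k - s' k := sub_nonneg.mpr (hc' k)
      exact mul_nonneg h1 h2
    calc (0 : ℝ) ≤ (∑ i, -(v i ⬝ᵥ (x' i - x i))) + ∑ i, d2 i ⬝ᵥ (c - s') := by linarith
      _ = ∑ i, (-(v i ⬝ᵥ (x' i - x i)) + d2 i ⬝ᵥ (c - s') - L i ⬝ᵥ (s' - s)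
            + d1 i₀ ⬝ᵥ ((σ' i - σ i) - ((N : ℝ) - 1) • (A i *ᵥ x' i - A i *ᵥ x i))) := by
          rw [Finset.sum_add_distrib, Finset.sum_sub_distrib, Finset.sum_add_distrib,
            hLz, hDz]
          ring
  -- conclude from the subgradient inequalities
  have hsg := Finset.sum_le_sum (s := Finset.univ)
    (fun i (_ : i ∈ Finset.univ) => hsub i (x' i) (σ' i))
  rw [Finset.sum_add_distrib, Finset.sum_add_distrib] at hsg
  rw [Finset.sum_add_distrib] at hkey
  calc ∑ i, J i (x i) (∑ j ∈ Finset.univ.erase i, A j *ᵥ x j)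
      = ∑ i, J i (x i) (σ i) :=
        Finset.sum_congr rfl (fun i _ => by rw [← hσid i])
    _ ≤ ∑ i, J i (x' i) (σ' i) := by linarith
    _ = ∑ i, J i (x' i) (∑ j ∈ Finset.univ.erase i, A j *ᵥ x' j) := by
        exact Finset.sum_congr rfl (fun i _ => by rw [hσ'])
end

section
/- Suppose x = (x_1,…,x_N) with x_i ∈ 𝒳_i and ρ ∈ ℝ^l satisfy the global KKT system: writing σ_i = Σ_{j≠i} A_j x_j, for every i there exist a subgradient (g_i, h_i) of J_i at (x_i, σ_i) and v_i ∈ N_{𝒳_i}(x_i) with g_i + Σ_{j≠i} A_i^T h_j + A_i^T ρ + v_i = 0, and ρ ≥ 0, c − Σ_i A_i x_i ≥ 0, ρ^T(c − Σ_i A_i x_i) = 0. Then there exist auxiliary variables (y_i)_{i∈𝒩}, edge variables (λ_{ji}, μ_{ji}, y_{ji})_{(j,i)∈ℰ}, and multipliers (d_{1i}, d_{2i})_{i∈𝒩} such that (x_i, σ_i, y_i)_{i∈𝒩}, (λ_{ji}, μ_{ji}, y_{ji})_{(j,i)∈ℰ}, and (d_{1i}, d_{2i})_{i∈𝒩} satisfy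 the decomposed zero system. -/
open Matrix Finset

lemma surj_aux {N : ℕ} (hN : 0 < N) (W : Matrix (Fin N) (Fin N) ℝ)
    (hWrow : W *ᵥ (fun _ => (1:ℝ)) = 0)
    (hWker : ∀ z : Fin N → ℝ, W *ᵥ z = 0 ↔ ∃ a : ℝ, z = fun _ => a)
    (b : Fin N → ℝ) (hb : ∑ i, b i = 0) :
    ∃ z, Wᵀ *ᵥ z = b := by
  set f := Wᵀ.mulVecLin with hf
  let S : (Fin N → ℝ) →ₗ[ℝ] ℝ :=
    { toFun := fun z => ∑ i, z i,
      map_add' := by intro a b; simp [Finset.sum_add_distrib],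
      map_smul' := by intro r a; simp [Finset.mul_sum] }
  have hcol : ∀ j, ∑ i, W j i = 0 := by
    intro j
    have := congrFun hWrow j
    simpa [Matrix.mulVec, dotProduct] using this
  have hrange : LinearMap.range f ≤ LinearMap.ker S := by
    rintro w ⟨z, rfl⟩
    simp only [LinearMap.mem_ker]
    show ∑ i, (Wᵀ *ᵥ z) i = 0
    calc ∑ i, (Wᵀ *ᵥ z) i = ∑ i, ∑ j, W j i * z j := by
          simp [Matrix.mulVec, dotProduct, Matrix.transpose_apply]
    _ = ∑ j, (∑ i, W j i) * z j := by rw [Finset.sum_comm]; simp [Finset.sum_mul]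
    _ = 0 := by simp [hcol]
  have hker : LinearMap.ker W.mulVecLin
      = Submodule.span ℝ {(fun _ => (1:ℝ) : Fin N → ℝ)} := by
    ext z
    rw [LinearMap.mem_ker, Submodule.mem_span_singleton, Matrix.mulVecLin_apply, hWker]
    constructor
    · rintro ⟨a, rfl⟩; exact ⟨a, by funext t; simp⟩
    · rintro ⟨a, rfl⟩; exact ⟨a, by funext t; simp⟩
  have h1 : Module.finrank ℝ (LinearMap.ker W.mulVecLin) = 1 := by
    rw [hker]
    refine finrank_span_singleton ?_
    intro h0
    have := congrFun h0 ⟨0, hN⟩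
    simpa using this
  have hrankW : Module.finrank ℝ (LinearMap.range W.mulVecLin) + 1 = N := by
    have := LinearMap.finrank_range_add_finrank_ker W.mulVecLin
    rw [h1] at this
    simpa using this
  have hrankf : Module.finrank ℝ (LinearMap.range f) + 1 = N := by
    have h2 : Module.finrank ℝ (LinearMap.range f) = Wᵀ.rank := rfl
    have h3 : Module.finrank ℝ (LinearMap.range W.mulVecLin) = W.rank := rfl
    rw [h2, Matrix.rank_transpose, ← h3]
    exact hrankW
  have hS : Module.finrank ℝ (LinearMap.ker S) + 1 = N := by
    have hsurj : LinearMap.range S = ⊤ := by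
      rw [LinearMap.range_eq_top]
      intro r
      refine ⟨fun _ => r / N, ?_⟩
      show ∑ _i : Fin N, r / (N:ℝ) = r
      rw [Finset.sum_const]
      simp
      field_simp
    have := LinearMap.finrank_range_add_finrank_ker S
    rw [hsurj] at this
    simp at this
    omega
  have heq2 : LinearMap.range f = LinearMap.ker S :=
    Submodule.eq_of_le_of_finrank_eq hrange (by omega)
  have hb' : b ∈ LinearMap.ker S := by
    simpa [S, LinearMap.mem_ker] using hb
  rw [← heq2] at hb'
  exact hb'

lemma sum_filter_snd {M : Type*} [AddCommMonoid M] {N : ℕ}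
    (E : Finset (Fin N × Fin N)) (i : Fin N) (f : Fin N × Fin N → M) :
    ∑ e ∈ E.filter (fun e => e.2 = i), f e
      = ∑ j ∈ Finset.univ.filter (fun j => (j, i) ∈ E), f (j, i) := by
  refine Finset.sum_nbij' (i := fun e => e.1) (j := fun j => (j, i)) ?_ ?_ ?_ ?_ ?_
  · intro e he; simp only [Finset.mem_filter] at he ⊢
    exact ⟨Finset.mem_univ _, by rw [show (e.1, i) = e by ext <;> simp [he.2]]; exact he.1⟩
  · intro j hj; simp only [Finset.mem_filter] at hj ⊢; exact ⟨hj.2, trivial⟩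
  · intro e he; simp only [Finset.mem_filter] at he
    ext <;> simp [he.2]
  · intro j hj; rfl
  · intro e he; simp only [Finset.mem_filter] at he
    rw [show (e.1, i) = e by ext <;> simp [he.2]]

lemma sum_filter_fst {M : Type*} [AddCommMonoid M] {N : ℕ}
    (E : Finset (Fin N × Fin N)) (i : Fin N) (f : Fin N × Fin N → M) :
    ∑ e ∈ E.filter (fun e => e.1 = i), f e
      = ∑ j ∈ Finset.univ.filter (fun j => (i, j) ∈ E), f (i, j) := by
  refine Finset.sum_nbij' (i := fun e => e.2) (j := fun j => (i, j)) ?_ ?_ ?_ ?_ ?_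
  · intro e he; simp only [Finset.mem_filter] at he ⊢
    exact ⟨Finset.mem_univ _, by rw [show (i, e.2) = e by ext <;> simp [he.2]]; exact he.1⟩
  · intro j hj; simp only [Finset.mem_filter] at hj ⊢; exact ⟨hj.2, trivial⟩
  · intro e he; simp only [Finset.mem_filter] at he
    ext <;> simp [he.2]
  · intro j hj; rfl
  · intro e he; simp only [Finset.mem_filter] at he
    rw [show (i, e.2) = e by ext <;> simp [he.2]]


/-- If `(x, ρ)` satisfies the global KKT system, then there exist
auxiliary variables `y`, edge variables `lam, mu, yE`, and multipliers
`d1, d2` such that, together with `x` and the correct aggregates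
`σ i = ∑_{j ≠ i} A j *ᵥ x j`, they satisfy the decomposed zero system. -/
theorem stmt_8
    (N l : ℕ) (hN : 2 ≤ N)
    (n : Fin N → ℕ)
    (X : ∀ i, Set (Fin (n i) → ℝ))
    (hXne : ∀ i, (X i).Nonempty)
    (hXcl : ∀ i, IsClosed (X i))
    (hXcv : ∀ i, Convex ℝ (X i))
    (A : ∀ i, Matrix (Fin l) (Fin (n i)) ℝ)
    (J : ∀ i, (Fin (n i) → ℝ) → (Fin l → ℝ) → ℝ)
    (hJ : ∀ i, ConvexOn ℝ Set.univ (fun p : (Fin (n i) → ℝ) × (Fin l → ℝ) => J i p.1 p.2))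
    (c : Fin l → ℝ)
    (E : Finset (Fin N × Fin N))
    (hloop : ∀ e ∈ E, e.1 ≠ e.2)
    (hconn : ∀ i j : Fin N,
      Relation.ReflTransGen (fun a b : Fin N => (a, b) ∈ E ∨ (b, a) ∈ E) i j)
    (W : Matrix (Fin N) (Fin N) ℝ)
    (hWrow : W *ᵥ (fun _ => (1 : ℝ)) = 0)
    (hWker : ∀ z : Fin N → ℝ, W *ᵥ z = 0 ↔ ∃ a : ℝ, z = fun _ => a)
    (hWsp : ∀ j i : Fin N, j ≠ i → (j, i) ∉ E → W j i = 0)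
    (x : ∀ i, Fin (n i) → ℝ)
    (σ : Fin N → Fin l → ℝ)
    (hsig : ∀ i, σ i = ∑ j ∈ Finset.univ.erase i, A j *ᵥ x j)
    (ρ : Fin l → ℝ)
    (g : ∀ i, Fin (n i) → ℝ) (h : Fin N → Fin l → ℝ) (v : ∀ i, Fin (n i) → ℝ)
    (hx : ∀ i, x i ∈ X i)
    (hsub : ∀ i, ∀ (x' : Fin (n i) → ℝ) (σ' : Fin l → ℝ),
      J i (x i) (σ i) + g i ⬝ᵥ (x' - x i) + h i ⬝ᵥ (σ' - σ i) ≤ J i x' σ')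
    (hv : ∀ i, ∀ w ∈ X i, v i ⬝ᵥ (w - x i) ≤ 0)
    (heq : ∀ i, g i + ∑ j ∈ Finset.univ.erase i, (A i)ᵀ *ᵥ h j
      + (A i)ᵀ *ᵥ ρ + v i = 0)
    (hrho : 0 ≤ ρ)
    (hfeas : 0 ≤ c - ∑ i, A i *ᵥ x i)
    (hcs : ρ ⬝ᵥ (c - ∑ i, A i *ᵥ x i) = 0) :
    ∃ (y : Fin N → Fin l → ℝ) (lam mu yE : Fin N × Fin N → Fin l → ℝ)
      (d1 d2 : Fin N → Fin l → ℝ),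
      DecomposedZero N l n X A J c E W x σ y lam mu yE d1 d2 := by
  
  have hN0 : 0 < N := by omega
  have hNR : (N:ℝ) ≠ 0 := Nat.cast_ne_zero.mpr (by omega)
  have hrhot : ∀ t, 0 ≤ ρ t := fun t => hrho t
  set T : Fin l → ℝ := ∑ j, A j *ᵥ x j with hT
  have hAσ : ∀ i, A i *ᵥ x i + σ i = T := by
    intro i
    rw [hsig i, hT]
    exact Finset.add_sum_erase Finset.univ (fun j => A j *ᵥ x j) (Finset.mem_univ i)
  have hσT : ∀ i, σ i = T - A i *ᵥ x i := by
    intro i; rw [← hAσ i]; abel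
  set sv : Fin l → ℝ := (N:ℝ)⁻¹ • (∑ j, h j + ρ) with hsdef
  set dv : Fin l → ℝ := (N:ℝ)⁻¹ • ρ with hdvdef
  set b : Fin N → Fin l → ℝ := fun i => sv - dv - h i with hbdef
  have hNs : ∀ t, (N:ℝ) * sv t = (∑ j, h j t) + ρ t := by
    intro t
    simp only [hsdef, Pi.smul_apply, Pi.add_apply, smul_eq_mul, Finset.sum_apply]
    field_simp
  have hNdv : ∀ t, (N:ℝ) * dv t = ρ t := by
    intro t
    simp only [hdvdef, Pi.smul_apply, smul_eq_mul]
    field_simp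
  have hbsum : ∀ t, ∑ i, b i t = 0 := by
    intro t
    have h1 := hNs t
    have h2 := hNdv t
    simp only [hbdef, Pi.sub_apply]
    rw [Finset.sum_sub_distrib, Finset.sum_sub_distrib, Finset.sum_const,
      Finset.sum_const, Finset.card_univ, Fintype.card_fin, nsmul_eq_mul, nsmul_eq_mul]
    linarith
  set r : Fin N → Fin l → ℝ := fun i => ((N : ℝ) - 1) • (A i *ᵥ x i) - σ i with hrdef
  have hrsum : ∀ t, ∑ i, r i t = 0 := by
    intro t
    have hTt : ∑ i, (A i *ᵥ x i) t = T t := by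
      rw [hT]; simp [Finset.sum_apply]
    calc ∑ i, r i t
        = ∑ i, (((N:ℝ)-1) * (A i *ᵥ x i) t - (T t - (A i *ᵥ x i) t)) := by
          refine Finset.sum_congr rfl fun i _ => ?_
          simp [hrdef, hσT i]
      _ = ∑ i, ((N:ℝ) * (A i *ᵥ x i) t) - ∑ _i : Fin N, T t := by
          rw [← Finset.sum_sub_distrib]
          exact Finset.sum_congr rfl fun i _ => by ring
      _ = 0 := by
          rw [← Finset.mul_sum, hTt, Finset.sum_const, Finset.card_univ,
            Fintype.card_fin, nsmul_eq_mul]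
          ring
  choose zy hzy using fun t => surj_aux hN0 W hWrow hWker (fun i => r i t) (hrsum t)
  choose zb hzb using fun t => surj_aux hN0 W hWrow hWker (fun i => b i t) (hbsum t)
  have hrow : ∀ i, ∑ k, W i k = 0 := by
    intro i
    have := congrFun hWrow i
    simpa [Matrix.mulVec, dotProduct] using this
  have hfsub : ∀ i : Fin N,
      (Finset.univ.filter (fun j => (j, i) ∈ E)) ⊆ Finset.univ.erase i := by
    intro i j hj
    simp only [Finset.mem_filter] at hj
    exact Finset.mem_erase.mpr ⟨hloop _ hj.2, Finset.mem_univ _⟩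
  have hfsub' : ∀ i : Fin N,
      (Finset.univ.filter (fun k => (i, k) ∈ E)) ⊆ Finset.univ.erase i := by
    intro i k hk
    simp only [Finset.mem_filter] at hk
    exact Finset.mem_erase.mpr ⟨fun hki => hloop _ hk.2 (by rw [hki]), Finset.mem_univ _⟩
  have hsum_col : ∀ (i : Fin N) (z : Fin N → ℝ),
      W i i * z i + ∑ j ∈ Finset.univ.filter (fun j => (j, i) ∈ E), W j i * z j
        = ∑ j, W j i * z j := by
    intro i z
    rw [← Finset.add_sum_erase _ (fun j => W j i * z j) (Finset.mem_univ i)]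
    congr 1
    refine Finset.sum_subset (hfsub i) ?_
    intro j hj hj'
    simp only [Finset.mem_filter, Finset.mem_univ, true_and] at hj'
    rw [hWsp j i (Finset.mem_erase.mp hj).1 hj', zero_mul]
  have hout : ∀ i : Fin N,
      ∑ k ∈ Finset.univ.filter (fun k => (i, k) ∈ E), W i k = -(W i i) := by
    intro i
    have h1 : ∑ k ∈ Finset.univ.filter (fun k => (i, k) ∈ E), W i k
        = ∑ k ∈ Finset.univ.erase i, W i k := by
      refine Finset.sum_subset (hfsub' i) ?_
      intro k hk hk'
      simp only [Finset.mem_filter, Finset.mem_univ, true_and] at hk'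
      exact hWsp i k (fun hik => (Finset.mem_erase.mp hk).1 hik.symm) hk'
    have h2 := Finset.add_sum_erase Finset.univ (fun k => W i k) (Finset.mem_univ i)
    rw [h1]
    have := hrow i
    linarith
  have hWT : ∀ (z : Fin N → ℝ) (i : Fin N), (Wᵀ *ᵥ z) i = ∑ j, W j i * z j := by
    intro z i
    simp [Matrix.mulVec, dotProduct, Matrix.transpose_apply]
  set y : Fin N → Fin l → ℝ := fun i t => zy t i with hydef
  set lam : Fin N × Fin N → Fin l → ℝ := fun e t => W e.1 e.2 * zb t e.1 with hlamdef
  set mu : Fin N × Fin N → Fin l → ℝ := fun e => W e.1 e.2 • sv with hmudef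
  set yE : Fin N × Fin N → Fin l → ℝ := fun e t => zy t e.1 with hyEdef
  have hlamB : ∀ i : Fin N,
      (∑ e ∈ E.filter (fun e => e.2 = i), lam e)
        - (∑ e ∈ E.filter (fun e => e.1 = i), lam e) = b i := by
    intro i
    funext t
    have h1 := congrFun (hzb t) i
    rw [hWT (zb t) i] at h1
    simp only [Pi.sub_apply, Finset.sum_apply]
    rw [sum_filter_snd E i (fun e => lam e t), sum_filter_fst E i (fun e => lam e t)]
    simp only [hlamdef]
    rw [← Finset.sum_mul, hout i]
    have h3 := hsum_col i (zb t)
    linarith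
  refine ⟨y, lam, mu, yE, fun _ => sv, fun _ => dv, ?_⟩
  intro i
  refine ⟨g i, h i, v i, hsub i, hx i, hv i, ?_, ?_, ?_, ?_, ?_, ?_, ?_, ?_, ?_, ?_⟩
  · intro j _; rfl
  · intro j hj; rw [hAσ i, hAσ j]
  · funext t
    have h1 := congrFun (hzy t) i
    rw [hWT (zy t) i] at h1
    have h3 := hsum_col i (zy t)
    simp only [Pi.sub_apply, Pi.add_apply, Pi.smul_apply, smul_eq_mul,
      Finset.sum_apply, hydef, hyEdef]
    have : (((N:ℝ)-1) * (A i *ᵥ x i) t - σ i t) = r i t := by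
      simp [hrdef]
    rw [this, ← h1, ← h3]
  · rw [hlamB i]
    set L : (Fin l → ℝ) →ₗ[ℝ] (Fin (n i) → ℝ) := ((A i)ᵀ).mulVecLin with hL
    have hvec : ((N:ℝ)-1) • sv + dv + b i = (∑ j ∈ Finset.univ.erase i, h j) + ρ := by
      funext t
      have h1 := hNs t
      have h2 : ∑ j ∈ Finset.univ.erase i, h j t = (∑ j, h j t) - h i t :=
        Finset.sum_erase_eq_sub (Finset.mem_univ i)
      simp only [hbdef, Pi.add_apply, Pi.sub_apply, Pi.smul_apply, smul_eq_mul,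
        Finset.sum_apply]
      rw [h2]
      ring_nf
      linarith
    have hfinal : ((N:ℝ)-1) • L sv + L dv + L (b i)
        = ∑ j ∈ Finset.univ.erase i, L (h j) + L ρ := by
      rw [← _root_.map_smul, ← map_add, ← map_add, hvec, map_add, map_sum]
    funext t
    have h1 := congrFun hfinal t
    have h2 := congrFun (heq i) t
    simp only [hL, Matrix.mulVecLin_apply, Pi.add_apply, Pi.smul_apply, Pi.sub_apply,
      Pi.zero_apply, smul_eq_mul, Finset.sum_apply] at h1 h2 ⊢
    linarith
  · rw [hlamB i]
    funext t
    simp only [hbdef, Pi.add_apply, Pi.sub_apply, Pi.zero_apply]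
    ring
  · have : ∑ k ∈ Finset.univ.filter (fun k => (i, k) ∈ E), mu (i, k)
        = (∑ k ∈ Finset.univ.filter (fun k => (i, k) ∈ E), W i k) • sv := by
      rw [Finset.sum_smul]
    rw [this, hout i]
    funext t
    simp
  · intro j _; rfl
  · intro t
    exact mul_nonneg (inv_nonneg.mpr (Nat.cast_nonneg N)) (hrhot t)
  · rw [hAσ i]
    intro t
    have := hfeas t
    simp only [Pi.sub_apply, Pi.zero_apply] at this
    linarith
  · rw [sub_sub, hAσ i, hdvdef, smul_dotProduct, hcs, smul_zero]
end

section
/- Let N ≥ 2, let W ∈ ℝ^{N×N} satisfy W·1_N = 0 and have kernel exactly span{1_N}, and let v_1,…,v_N, σ_1,…,σ_N ∈ ℝ^l. Then the following are equivalent: (a) σ_i = Σ_{j≠i} v_j for every i; (b) there exist y_1,…,y_N ∈ ℝ^l such that (N−1)·v_i − σ_i = Σ_{j=1}^N W_{ji}·y_j for every i, and v_i + σ_i = v_j + σ_j for all i, j. -/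
/-!
Both conditions force `v i + σ i` to be one common vector `c` and differ only in how they pin `c`
down to `∑ j, v j`. Since `ker W = span 1`, the range of `Wᵀ` is the annihilator of `span 1`,
i.e. the zero-sum vectors; so the auxiliary `y` exist exactly when
`∑ i, ((N - 1) • v i - σ i) = 0`, which under consensus reads `N • (∑ j, v j - c) = 0`.
-/

open Matrix Finset

theorem Matrix.exists_vecMul_eq_of_dotProduct_eq_zero {K m n : Type*} [Field K] [Fintype m]
    [Fintype n] [DecidableEq m] [DecidableEq n] (W : Matrix m n K) (u : n → K)
    (hu : ∀ x, W *ᵥ x = 0 → u ⬝ᵥ x = 0) : ∃ z, z ᵥ* W = u := by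
  -- `range Wᵀ = (ker W)ᗮ`, in the form `range f.dualMap = (ker f).dualAnnihilator`.
  have hmem : dotProductEquiv K n u ∈ LinearMap.range W.mulVecLin.dualMap := by
    rw [LinearMap.range_dualMap_eq_dualAnnihilator_ker, Submodule.mem_dualAnnihilator]
    exact hu
  obtain ⟨ψ, hψ⟩ := hmem
  obtain ⟨z, rfl⟩ := (dotProductEquiv K m).surjective ψ
  refine ⟨z, funext fun i => ?_⟩
  simpa [dotProduct_mulVec, vecMul_apply] using LinearMap.congr_fun hψ (Pi.single i 1)

theorem Matrix.exists_vecMul_eq_iff_sum_eq_zero {K m n : Type*} [Field K] [Fintype m]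
    [Fintype n] [DecidableEq m] [DecidableEq n] (W : Matrix m n K)
    (hWker : ∀ z : n → K, W *ᵥ z = 0 ↔ ∃ a : K, z = fun _ => a) (u : n → K) :
    (∃ z, z ᵥ* W = u) ↔ ∑ i, u i = 0 := by
  constructor
  · rintro ⟨z, rfl⟩
    rw [← dotProduct_one, ← dotProduct_mulVec, (hWker 1).2 ⟨1, rfl⟩, dotProduct_zero]
  · intro hu
    refine W.exists_vecMul_eq_of_dotProduct_eq_zero u fun x hx => ?_
    obtain ⟨a, rfl⟩ := (hWker x).1 hx
    simp [dotProduct, ← sum_mul, hu]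

theorem Matrix.exists_eq_sum_smul_iff_sum_eq_zero {K m n κ : Type*} [Field K] [Fintype m]
    [Fintype n] [DecidableEq m] [DecidableEq n] (W : Matrix m n K)
    (hWker : ∀ z : n → K, W *ᵥ z = 0 ↔ ∃ a : K, z = fun _ => a) (u : n → κ → K) :
    (∃ y : m → κ → K, ∀ i, u i = ∑ j, W j i • y j) ↔ ∑ i, u i = 0 := by
  have hcoord : ∀ (y : m → κ → K) i k, (∑ j, W j i • y j) k = ((fun j => y j k) ᵥ* W) i := by
    simp [vecMul, dotProduct, mul_comm]
  constructor
  · rintro ⟨y, hy⟩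
    funext k
    simpa [hy, hcoord] using (W.exists_vecMul_eq_iff_sum_eq_zero hWker _).1 ⟨fun j => y j k, rfl⟩
  · intro hu
    have hsolve k := (W.exists_vecMul_eq_iff_sum_eq_zero hWker fun i => u i k).2
      (by simpa using congrFun hu k)
    choose z hz using hsolve
    exact ⟨fun j k => z k j, fun i => funext fun k => by rw [hcoord, hz]⟩

theorem sum_smul_sub_eq_smul_sum_sub {𝕜 ι E : Type*} [Field 𝕜] [Fintype ι] [AddCommGroup E]
    [Module 𝕜 E] {v σ : ι → E} {c : E} (hσ : ∀ j, σ j = c - v j) :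
    ∑ j, (((Fintype.card ι : 𝕜) - 1) • v j - σ j) = (Fintype.card ι : 𝕜) • (∑ j, v j - c) := by
  have hterm : ∀ j, ((Fintype.card ι : 𝕜) - 1) • v j - σ j = (Fintype.card ι : 𝕜) • v j - c := by
    intro j
    rw [hσ]
    module
  simp only [hterm, sum_sub_distrib, ← smul_sum, sum_const, card_univ, smul_sub,
    Nat.cast_smul_eq_nsmul]

theorem forall_eq_sum_erase_iff {𝕜 ι E : Type*} [Field 𝕜] [CharZero 𝕜] [Fintype ι]
    [DecidableEq ι] [AddCommGroup E] [Module 𝕜 E] (v σ : ι → E) :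
    (∀ i, σ i = ∑ j ∈ univ.erase i, v j) ↔
      ∑ i, (((Fintype.card ι : 𝕜) - 1) • v i - σ i) = 0 ∧ ∀ i j, v i + σ i = v j + σ j := by
  simp_rw [sum_erase_eq_sub (mem_univ _)]
  constructor
  · intro h
    have hσ : ∀ j, σ j = ∑ k, v k - v j := h
    refine ⟨by rw [sum_smul_sub_eq_smul_sum_sub hσ, sub_self, smul_zero], fun i j => ?_⟩
    rw [h i, h j, add_sub_cancel, add_sub_cancel]
  · rintro ⟨hsum, hcons⟩ i
    have hσ : ∀ j, σ j = (v i + σ i) - v j := fun j => by rw [hcons i j, add_sub_cancel_left]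
    have hcard : (Fintype.card ι : 𝕜) ≠ 0 := Nat.cast_ne_zero.2 (Fintype.card_pos_iff.2 ⟨i⟩).ne'
    rw [sum_smul_sub_eq_smul_sum_sub hσ, smul_eq_zero_iff_right hcard, sub_eq_zero] at hsum
    rw [hsum, add_sub_cancel_left]

theorem stmt_9_general
    (N l : ℕ)
    (W : Matrix (Fin N) (Fin N) ℝ)
    (hWker : ∀ z : Fin N → ℝ, W *ᵥ z = 0 ↔ ∃ a : ℝ, z = fun _ => a)
    (v σ : Fin N → Fin l → ℝ) :
    (∀ i, σ i = ∑ j ∈ Finset.univ.erase i, v j) ↔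
    (∃ y : Fin N → Fin l → ℝ,
      (∀ i, ((N : ℝ) - 1) • v i - σ i = ∑ j, W j i • y j) ∧
      (∀ i j, v i + σ i = v j + σ j)) := by
  rw [forall_eq_sum_erase_iff (𝕜 := ℝ), Fintype.card_fin, exists_and_right,
    W.exists_eq_sum_smul_iff_sum_eq_zero hWker]

/-- For `N ≥ 2` and a weight matrix `W` with `W · 1 = 0` and
kernel exactly the span of the all-ones vector, the direct aggregate
constraints `σ i = ∑_{j ≠ i} v j` are equivalent to the existence of auxiliary
variables `y j` with `(N-1)•v i - σ i = ∑ j, W j i • y j` for all `i` together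
with the consensus constraints `v i + σ i = v j + σ j` for all `i, j`. -/
theorem stmt_9
    (N l : ℕ) (hN : 2 ≤ N)
    (W : Matrix (Fin N) (Fin N) ℝ)
    (hWrow : W *ᵥ (fun _ => (1 : ℝ)) = 0)
    (hWker : ∀ z : Fin N → ℝ, W *ᵥ z = 0 ↔ ∃ a : ℝ, z = fun _ => a)
    (v σ : Fin N → Fin l → ℝ) :
    (∀ i, σ i = ∑ j ∈ Finset.univ.erase i, v j) ↔
    (∃ y : Fin N → Fin l → ℝ,
      (∀ i, ((N : ℝ) - 1) • v i - σ i = ∑ j, W j i • y j) ∧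
      (∀ i j, v i + σ i = v j + σ j)) :=
  stmt_9_general N l W hWker v σ
end

section
/- Let τ > 0, let S be a finite index set with cardinality |S|, and let ỹ ∈ ℝ^l and ỹ_j, μ̃_j ∈ ℝ^l for j ∈ S. Define y⁺ := ((1+τ²)/(1+τ²(1+|S|))) · ( ỹ + (τ/(1+τ²)) Σ_{j∈S} (μ̃_j + τ·ỹ_j) ), μ_j⁺ := (1/(1+τ²))·μ̃_j + (τ/(1+τ²))·(ỹ_j − y⁺) for j ∈ S, and y_j⁺ := ỹ_j − τ·μ_j⁺ for j ∈ S. Then (y⁺, (μ_j⁺)_{j∈S}, (y_j⁺)_{j∈S}) is the unique solution (y, (μ_j), (y_j)) in ℝ^l × (ℝ^l)^S × (ℝ^l)^S of the linear system: μ_j + τ·(y − y_j) = μ̃_j for all j ∈ S, y − τ·Σ_{j∈S} μ_j = ỹ, and y_j + τ·μ_j = ỹ_j for all j ∈ S. -/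
open Finset

/-- The Auxiliary-Consensus-Update formulas give the unique
solution of the resolvent linear system. Here `S` is a finite index set,
`yt = ỹ`, `ytj j = ỹ_j`, `μt j = μ̃_j`, and `yp`, `μp`, `yjp` are the
closed-form updates `y⁺`, `μ_j⁺`, `y_j⁺`. -/
theorem stmt_10
    (l : ℕ) (S : Type*) [Fintype S]
    (τ : ℝ) (hτ : 0 < τ)
    (yt : Fin l → ℝ) (ytj μt : S → Fin l → ℝ)
    (yp : Fin l → ℝ) (μp yjp : S → Fin l → ℝ)
    (hyp : yp = ((1 + τ ^ 2) / (1 + τ ^ 2 * (1 + (Fintype.card S : ℝ)))) •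
      (yt + (τ / (1 + τ ^ 2)) • ∑ j, (μt j + τ • ytj j)))
    (hmup : ∀ j, μp j = (1 / (1 + τ ^ 2)) • μt j + (τ / (1 + τ ^ 2)) • (ytj j - yp))
    (hyjp : ∀ j, yjp j = ytj j - τ • μp j) :
    -- (yp, μp, yjp) solves the linear system
    ((∀ j, μp j + τ • (yp - yjp j) = μt j) ∧
     (yp - τ • ∑ j, μp j = yt) ∧
     (∀ j, yjp j + τ • μp j = ytj j)) ∧
    -- and it is the unique solution
    (∀ (y : Fin l → ℝ) (μ yv : S → Fin l → ℝ),
      (∀ j, μ j + τ • (y - yv j) = μt j) →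
      (y - τ • ∑ j, μ j = yt) →
      (∀ j, yv j + τ • μ j = ytj j) →
      y = yp ∧ μ = μp ∧ yv = yjp) := by
  have hc : (1 + τ ^ 2) ≠ 0 := by positivity
  set n : ℝ := (Fintype.card S : ℝ) with hn
  have hn0 : (0:ℝ) ≤ n := Nat.cast_nonneg _
  have hd : (1 + τ ^ 2 * (1 + n)) ≠ 0 := by positivity
  have hypi : ∀ i, yp i = (1 + τ ^ 2) / (1 + τ ^ 2 * (1 + n)) *
      (yt i + τ / (1 + τ ^ 2) * ∑ j, (μt j i + τ * ytj j i)) := by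
    intro i
    rw [hyp]
    simp [Finset.sum_apply, smul_eq_mul]
  have hmupi : ∀ j i, μp j i = 1 / (1 + τ ^ 2) * μt j i + τ / (1 + τ ^ 2) * (ytj j i - yp i) := by
    intro j i
    rw [hmup j]
    simp [smul_eq_mul]
  have hyjpi : ∀ j i, yjp j i = ytj j i - τ * μp j i := by
    intro j i; rw [hyjp j]; simp [smul_eq_mul]
  have hypic : ∀ i, (1 + τ ^ 2 * (1 + n)) * yp i =
      (1 + τ ^ 2) * yt i + τ * ∑ j, (μt j i + τ * ytj j i) := by
    intro i
    rw [hypi i]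
    field_simp
  have keyp : ∀ j i, (1 + τ ^ 2) * μp j i = μt j i + τ * ytj j i - τ * yp i := by
    intro j i
    rw [hmupi j i]
    field_simp
    ring
  have hsump : ∀ (μ : S → Fin l → ℝ) (z : Fin l → ℝ),
      (∀ j i, (1 + τ ^ 2) * μ j i = μt j i + τ * ytj j i - τ * z i) →
      ∀ i, (1 + τ ^ 2) * ∑ j, μ j i = (∑ j, (μt j i + τ * ytj j i)) - n * (τ * z i) := by
    intro μ z hk i
    rw [Finset.mul_sum, Finset.sum_congr rfl fun j _ => hk j i,
      Finset.sum_sub_distrib, Finset.sum_const, card_univ, nsmul_eq_mul]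
  constructor
  · refine ⟨fun j => ?_, ?_, fun j => ?_⟩
    · funext i
      simp only [Pi.add_apply, Pi.smul_apply, Pi.sub_apply, smul_eq_mul]
      rw [hyjpi, hmupi]
      field_simp
      ring
    · funext i
      simp only [Pi.sub_apply, Pi.smul_apply, Finset.sum_apply, smul_eq_mul]
      have hs := hsump μp yp keyp i
      have h2' : (1 + τ ^ 2) * (yp i - τ * ∑ j, μp j i) = (1 + τ ^ 2) * yt i := by
        linear_combination hypic i - τ * hs
      exact mul_left_cancel₀ hc h2'
    · funext i
      simp only [Pi.add_apply, Pi.smul_apply, smul_eq_mul]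
      rw [hyjpi]; ring
  · intro y μ yv h1 h2 h3
    have key : ∀ j i, (1 + τ ^ 2) * μ j i = μt j i + τ * ytj j i - τ * y i := by
      intro j i
      have e1 := congrFun (h1 j) i
      have e3 := congrFun (h3 j) i
      simp only [Pi.add_apply, Pi.smul_apply, Pi.sub_apply, smul_eq_mul] at e1 e3
      linear_combination e1 + τ * e3
    have hy : y = yp := by
      funext i
      have e2 := congrFun h2 i
      simp only [Pi.sub_apply, Pi.smul_apply, Finset.sum_apply, smul_eq_mul] at e2
      have hsum := hsump μ y key i
      have h2' : (1 + τ ^ 2 * (1 + n)) * y i = (1 + τ ^ 2 * (1 + n)) * yp i := by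
        rw [hypic i]
        linear_combination (1 + τ ^ 2) * e2 + τ * hsum
      exact mul_left_cancel₀ hd h2'
    refine ⟨hy, ?_, ?_⟩
    · funext j i
      have hk := key j i
      rw [hy] at hk
      rw [hmupi j i]
      field_simp
      linarith [hk]
    · funext j i
      have e3 := congrFun (h3 j) i
      simp only [Pi.add_apply, Pi.smul_apply, smul_eq_mul] at e3
      rw [hyjpi j i]
      have hk := key j i
      rw [hy] at hk
      have hμ : μ j i = μp j i := by
        rw [hmupi j i]; field_simp; linarith [hk]
      rw [← hμ]
      linarith [e3]
end
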